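/- arXiv:1310.8302 — 7 statements merged into one kernel-verified Lean document; each statement's English description precedes it below -/
import Mathlib

section
/- Suppose an ontological model reproduces the quantum probability of the optimal two-outcome discrimination measurement for pure states ψ and φ on a finite ontic space Λ. Then the classical overlap of the epistemic states is at most the quantum overlap: ∑_λ min(μ_ψ(λ), μ_φ(λ)) ≤ 1 − √(1 − |⟨ψ|φ⟩|²). -/
/-!
Pointwise, the convex combination `ξ μψ + (1 - ξ) μφ` is at most `max μψ μφ`, and
`max + min = μψ + μφ`. Summing, any response function succeeds in discriminating the epistemic
states with probability at most `1 - (1/2) ∑ min μψ μφ`. If it attains the quantum optimum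
`(1/2)(1 + √(1 - |⟨ψ|φ⟩|²))`, rearranging gives the bound on the classical overlap.
-/

open Finset

theorem Finset.sum_min_add_sum_max {ι α : Type*} [LinearOrder α] [AddCommMonoid α]
    (s : Finset ι) (f g : ι → α) :
    ∑ i ∈ s, min (f i) (g i) + ∑ i ∈ s, max (f i) (g i) = ∑ i ∈ s, f i + ∑ i ∈ s, g i := by
  simp only [← sum_add_distrib, min_add_max]

section

variable {ι 𝕜 : Type*} [Field 𝕜] [LinearOrder 𝕜] [IsStrictOrderedRing 𝕜]

theorem Finset.sum_mul_add_sum_one_sub_mul_le_sum_max (s : Finset ι) {ξ f g : ι → 𝕜}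
    (hξ0 : ∀ i ∈ s, 0 ≤ ξ i) (hξ1 : ∀ i ∈ s, ξ i ≤ 1) :
    ∑ i ∈ s, ξ i * f i + ∑ i ∈ s, (1 - ξ i) * g i ≤ ∑ i ∈ s, max (f i) (g i) := by
  rw [← sum_add_distrib]
  exact sum_le_sum fun i hi =>
    Convex.combo_le_max (f i) (g i) (hξ0 i hi) (sub_nonneg.2 (hξ1 i hi)) (add_sub_cancel _ _)

theorem discrimination_success_le_one_sub_half_sum_min [Fintype ι] {μ ν ξ : ι → 𝕜}
    (hμ : ∑ i, μ i = 1) (hν : ∑ i, ν i = 1) (hξ0 : ∀ i, 0 ≤ ξ i) (hξ1 : ∀ i, ξ i ≤ 1) :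
    (1 / 2) * ∑ i, ξ i * μ i + (1 / 2) * ∑ i, (1 - ξ i) * ν i
      ≤ 1 - (1 / 2) * ∑ i, min (μ i) (ν i) := by
  have hmax := sum_mul_add_sum_one_sub_mul_le_sum_max univ (f := μ) (g := ν)
    (fun i _ => hξ0 i) (fun i _ => hξ1 i)
  have hminmax := sum_min_add_sum_max univ μ ν
  rw [hμ, hν] at hminmax
  linear_combination (1 / 2 : 𝕜) * hmax + (1 / 2 : 𝕜) * hminmax

end

theorem overlap_bound_from_optimal_discrimination_general
    (Λ : Type) [Fintype Λ]
    (E : Type) [NormedAddCommGroup E] [InnerProductSpace ℂ E]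
    (ψ φ : E)
    (μψ μφ : Λ → ℝ)
    (hμψ1 : ∑ l, μψ l = 1) (hμφ1 : ∑ l, μφ l = 1)
    (hmodel : ∃ ξ : Λ → ℝ, (∀ l, 0 ≤ ξ l) ∧ (∀ l, ξ l ≤ 1) ∧
      (1/2) * ∑ l, ξ l * μψ l + (1/2) * ∑ l, (1 - ξ l) * μφ l
        = (1/2) * (1 + Real.sqrt (1 - ‖(inner ℂ ψ φ : ℂ)‖^2))) :
    ∑ l, min (μψ l) (μφ l) ≤ 1 - Real.sqrt (1 - ‖(inner ℂ ψ φ : ℂ)‖^2) := by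
  obtain ⟨ξ, hξ0, hξ1, hoptimal⟩ := hmodel
  have hsuccess := discrimination_success_le_one_sub_half_sum_min hμψ1 hμφ1 hξ0 hξ1
  rw [hoptimal] at hsuccess
  linarith

theorem overlap_bound_from_optimal_discrimination
    (Λ : Type) [Fintype Λ]
    (E : Type) [NormedAddCommGroup E] [InnerProductSpace ℂ E] [FiniteDimensional ℂ E]
    (ψ φ : E) (hψ : ‖ψ‖ = 1) (hφ : ‖φ‖ = 1)
    (μψ μφ : Λ → ℝ)
    (hμψ : ∀ l, 0 ≤ μψ l) (hμφ : ∀ l, 0 ≤ μφ l)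
    (hμψ1 : ∑ l, μψ l = 1) (hμφ1 : ∑ l, μφ l = 1)
    (hmodel : ∃ ξ : Λ → ℝ, (∀ l, 0 ≤ ξ l) ∧ (∀ l, ξ l ≤ 1) ∧
      (1/2) * ∑ l, ξ l * μψ l + (1/2) * ∑ l, (1 - ξ l) * μφ l
        = (1/2) * (1 + Real.sqrt (1 - ‖(inner ℂ ψ φ : ℂ)‖^2))) :
    ∑ l, min (μψ l) (μφ l) ≤ 1 - Real.sqrt (1 - ‖(inner ℂ ψ φ : ℂ)‖^2) :=
  overlap_bound_from_optimal_discrimination_general Λ E ψ φ μψ μφ hμψ1 hμφ1 hmodel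
end

section
/- Three unit vectors a, b, c in a complex Hilbert space with pairwise squared overlaps x₁ = |⟨a|b⟩|², x₂ = |⟨b|c⟩|², x₃ = |⟨c|a⟩|² satisfying x₁ + x₂ + x₃ < 1 and (x₁ + x₂ + x₃ − 1)² ≥ 4x₁x₂x₃ admit an orthonormal basis {f₁, f₂, f₃} of their span (assumed 3-dimensional) with ⟨f₁|a⟩ = 0, ⟨f₂|b⟩ = 0, ⟨f₃|c⟩ = 0. -/
/-!
A linear map from `span {a, b, c}` sending `a, b, c` to vectors with the same Gram matrix is an
isometry, and both its domain and `ℂ³` are 3-dimensional. So it suffices to find unit vectors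
`a', b', c' ∈ ℂ³` with the overlaps of `a, b, c` and `a'₀ = b'₁ = c'₂ = 0`: the standard basis
pulled back to the span is then the required basis. We take
`a' = (0, √(1 - t), √t)`, `b' = (β, 0, ⟨a|b⟩/√t)`, `c' = (⟨b|c⟩/β, γ, 0)`. Normalising `b'` fixes
`β² = 1 - x₁/t`, normalising `c'` fixes `|γ|²`, and the phase of `γ` can be chosen to give
`⟨c'|a'⟩ = ⟨c|a⟩` exactly when `(1 - t) |γ|² = x₃`, i.e. when `t` is a root of
`(1 - x₂) t² - (1 + x₁ - x₂ - x₃) t + x₁ (1 - x₃)`. Its discriminant is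
`(x₁ + x₂ + x₃ - 1)² - 4 x₁ x₂ x₃`, and for `x₁ + x₂ + x₃ < 1` its larger root lies in `(x₁, 1]`.
-/

open Module
open scoped ComplexConjugate

theorem exists_root_of_overlap_inequalities {x₁ x₂ x₃ : ℝ} (h₁ : 0 ≤ x₁) (h₂ : 0 ≤ x₂)
    (h₃ : 0 ≤ x₃) (hsum : x₁ + x₂ + x₃ < 1)
    (hdisc : 4 * x₁ * x₂ * x₃ ≤ (x₁ + x₂ + x₃ - 1) ^ 2) :
    ∃ t : ℝ, x₁ < t ∧ t ≤ 1 ∧ x₂ * t < t - x₁ ∧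
      (1 - t) * (t - x₁ - x₂ * t) = x₃ * (t - x₁) := by
  set s := √((x₁ + x₂ + x₃ - 1) ^ 2 - 4 * x₁ * x₂ * x₃)
  have hs0 : 0 ≤ s := Real.sqrt_nonneg _
  have hs : s ^ 2 = (x₁ + x₂ + x₃ - 1) ^ 2 - 4 * x₁ * x₂ * x₃ := Real.sq_sqrt (by linarith)
  have hs_le : s ≤ 1 - x₁ - x₂ + x₃ := by
    nlinarith [mul_nonneg h₃ (by linarith : (0:ℝ) ≤ 1 - x₁ - x₂ - x₃),
      mul_nonneg (mul_nonneg h₁ h₂) h₃]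
  set t := (1 + x₁ - x₂ - x₃ + s) / (2 * (1 - x₂))
  have ht : t * (2 * (1 - x₂)) = 1 + x₁ - x₂ - x₃ + s := div_mul_cancel₀ _ (by linarith)
  refine ⟨t, ?_, ?_, ?_, ?_⟩ <;> nlinarith

theorem exists_params_of_overlap_inequalities {x₁ x₂ x₃ : ℝ} (h₁ : 0 ≤ x₁) (h₂ : 0 ≤ x₂)
    (h₃ : 0 ≤ x₃) (hsum : x₁ + x₂ + x₃ < 1)
    (hdisc : 4 * x₁ * x₂ * x₃ ≤ (x₁ + x₂ + x₃ - 1) ^ 2) :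
    ∃ u v g : ℝ, 0 < u ∧ u ^ 2 ≤ 1 ∧ 0 < v ∧ 0 ≤ g ∧ u ^ 2 * v ^ 2 + x₁ = u ^ 2 ∧
      x₂ + v ^ 2 * g = v ^ 2 ∧ (1 - u ^ 2) * g = x₃ := by
  obtain ⟨t, hx₁t, ht1, hx₂t, hroot⟩ := exists_root_of_overlap_inequalities h₁ h₂ h₃ hsum hdisc
  have ht0 : 0 < t := by linarith
  have htx₁ : 0 < t - x₁ := by linarith
  have hu : √t ^ 2 = t := Real.sq_sqrt ht0.le
  have hv : √((t - x₁) / t) ^ 2 = (t - x₁) / t := Real.sq_sqrt (by positivity)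
  refine ⟨√t, √((t - x₁) / t), (t - x₁ - x₂ * t) / (t - x₁), by positivity, by rwa [hu],
    by positivity, div_nonneg (by linarith) htx₁.le, ?_, ?_, ?_⟩
  · rw [hu, hv]; field_simp; ring
  · rw [hv]; field_simp; ring
  · rw [hu]; field_simp; linarith

theorem exists_ofReal_mul_eq {w g : ℝ} (hw : 0 ≤ w) (hg : 0 ≤ g) {r : ℂ}
    (h : w ^ 2 * g = ‖r‖ ^ 2) : ∃ γ : ℂ, ‖γ‖ ^ 2 = g ∧ (w : ℂ) * γ = r := by
  rcases hw.eq_or_lt with rfl | hw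
  · have hr : r = 0 := by simpa [eq_comm] using h
    exact ⟨√g, by simp [Real.sq_sqrt hg], by simp [hr]⟩
  · refine ⟨r / w, ?_, mul_div_cancel₀ _ (by exact_mod_cast hw.ne')⟩
    rw [norm_div, Complex.norm_real, Real.norm_of_nonneg hw.le, div_pow, ← h]
    field_simp

theorem exists_model_of_params (p q r : ℂ) {u v g : ℝ} (hu : 0 < u) (hu1 : u ^ 2 ≤ 1)
    (hv : 0 < v) (hg : 0 ≤ g) (hb : u ^ 2 * v ^ 2 + ‖p‖ ^ 2 = u ^ 2)
    (hc : ‖q‖ ^ 2 + v ^ 2 * g = v ^ 2) (hr : (1 - u ^ 2) * g = ‖r‖ ^ 2) :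
    ∃ a b c : EuclideanSpace ℂ (Fin 3), a 0 = 0 ∧ b 1 = 0 ∧ c 2 = 0 ∧
      ‖a‖ = 1 ∧ ‖b‖ = 1 ∧ ‖c‖ = 1 ∧ inner ℂ a b = p ∧ inner ℂ b c = q ∧ inner ℂ c a = r := by
  set w := √(1 - u ^ 2)
  have hw : w ^ 2 = 1 - u ^ 2 := Real.sq_sqrt (by linarith)
  obtain ⟨γ, hγ, hγr⟩ := exists_ofReal_mul_eq (Real.sqrt_nonneg _ : 0 ≤ w) hg (by rwa [hw])
  refine ⟨!₂[0, w, u], !₂[v, 0, p / u], !₂[q / v, conj γ, 0], rfl, rfl, rfl,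
    ?_, ?_, ?_, ?_, ?_, ?_⟩ <;>
    simp only [EuclideanSpace.norm_eq, Real.sqrt_eq_one, PiLp.inner_apply, RCLike.inner_apply,
      Fin.sum_univ_three, Matrix.cons_val_zero, Matrix.cons_val_one, Matrix.cons_val, Fin.isValue,
      norm_zero, Complex.norm_real, Complex.norm_div, RCLike.norm_conj, Real.norm_eq_abs, div_pow,
      sq_abs, ne_eq, OfNat.ofNat_ne_zero, not_false_eq_true, zero_pow, map_zero, map_div₀,
      Complex.conj_ofReal, Complex.conj_conj, mul_zero, zero_mul, add_zero, zero_add]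
  · rw [hw]; ring
  · field_simp; linarith
  · rw [hγ]; field_simp; linarith
  · exact div_mul_cancel₀ p (by exact_mod_cast hu.ne')
  · exact div_mul_cancel₀ q (by exact_mod_cast hv.ne')
  · linear_combination hγr

section Gram

variable {𝕜 E F ι : Type*} [RCLike 𝕜] [NormedAddCommGroup E] [InnerProductSpace 𝕜 E]
  [NormedAddCommGroup F] [InnerProductSpace 𝕜 F]

theorem inner_triple_eq_of_norm_eq_of_inner_eq {a b c : E} {a' b' c' : F}
    (ha : ‖a'‖ = ‖a‖) (hb : ‖b'‖ = ‖b‖) (hc : ‖c'‖ = ‖c‖)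
    (hab : inner 𝕜 a' b' = inner 𝕜 a b) (hbc : inner 𝕜 b' c' = inner 𝕜 b c)
    (hca : inner 𝕜 c' a' = inner 𝕜 c a) (i j : Fin 3) :
    inner 𝕜 (![a', b', c'] i) (![a', b', c'] j) = inner 𝕜 (![a, b, c] i) (![a, b, c] j) := by
  have hba : inner 𝕜 b' a' = inner 𝕜 b a := by rw [← inner_conj_symm, hab, inner_conj_symm]
  have hcb : inner 𝕜 c' b' = inner 𝕜 c b := by rw [← inner_conj_symm, hbc, inner_conj_symm]
  have hac : inner 𝕜 a' c' = inner 𝕜 a c := by rw [← inner_conj_symm, hca, inner_conj_symm]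
  fin_cases i <;> fin_cases j <;>
    simp [inner_self_eq_norm_sq_to_K, ha, hb, hc, hab, hbc, hca, hba, hcb, hac]

theorem LinearIndependent.exists_linearIsometry_span_of_inner_eq {v : ι → E}
    (hv : LinearIndependent 𝕜 v) {w : ι → F}
    (hw : ∀ i j, inner 𝕜 (w i) (w j) = inner 𝕜 (v i) (v j)) :
    ∃ Φ : Submodule.span 𝕜 (Set.range v) →ₗᵢ[𝕜] F, ∀ i, Φ (Basis.span hv i) = w i := by
  let B := Basis.span hv
  let S := B.constr 𝕜 w
  have hS : ((innerₛₗ 𝕜).comp S).compl₂ S = innerₛₗ 𝕜 := by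
    refine LinearMap.ext_basis B B fun i j => ?_
    change inner 𝕜 (S (B i)) (S (B j)) = inner 𝕜 (B i) (B j)
    rw [B.constr_basis, B.constr_basis, Submodule.coe_inner, Basis.span_apply, Basis.span_apply, hw]
  exact ⟨S.isometryOfInner fun x y => congr($hS x y), B.constr_basis 𝕜 w⟩

theorem LinearIndependent.exists_orthonormal_inner_eq [Fintype ι] [DecidableEq ι] {v : ι → E}
    (hv : LinearIndependent 𝕜 v) {w : ι → EuclideanSpace 𝕜 ι}
    (hw : ∀ i j, inner 𝕜 (w i) (w j) = inner 𝕜 (v i) (v j)) :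
    ∃ f : ι → E, Orthonormal 𝕜 f ∧ (∀ i, f i ∈ Submodule.span 𝕜 (Set.range v)) ∧
      ∀ i j, inner 𝕜 (f i) (v j) = w j i := by
  obtain ⟨Φ, hΦ⟩ := hv.exists_linearIsometry_span_of_inner_eq hw
  have := Module.Finite.of_basis (Basis.span hv)
  let Ψ := Φ.toLinearIsometryEquiv (by rw [finrank_span_eq_card hv, finrank_euclideanSpace])
  let e := (EuclideanSpace.basisFun ι 𝕜).map Ψ.symm
  refine ⟨fun i => e i, e.orthonormal.comp_linearIsometry (Submodule.subtypeₗᵢ _),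
    fun i => (e i).2, fun i j => ?_⟩
  calc inner 𝕜 (e i : E) (v j)
      = inner 𝕜 (Ψ.symm (EuclideanSpace.single i 1)) (Basis.span hv j) := by
        rw [Submodule.coe_inner, Basis.span_apply]; simp [e]
    _ = inner 𝕜 (EuclideanSpace.single i 1) (Φ (Basis.span hv j)) :=
        Ψ.symm.inner_map_eq_flip _ _
    _ = w j i := by rw [hΦ, EuclideanSpace.inner_single_left, map_one, one_mul]

end Gram

theorem pp_incompatible_of_overlap_inequalities_general
    (E : Type) [NormedAddCommGroup E] [InnerProductSpace ℂ E]
    (a b c : E) (ha : ‖a‖ = 1) (hb : ‖b‖ = 1) (hc : ‖c‖ = 1)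
    (hspan : Module.finrank ℂ (Submodule.span ℂ ({a, b, c} : Set E)) = 3)
    (h1 : ‖(inner ℂ a b : ℂ)‖^2 + ‖(inner ℂ b c : ℂ)‖^2 + ‖(inner ℂ c a : ℂ)‖^2 < 1)
    (h2 : (‖(inner ℂ a b : ℂ)‖^2 + ‖(inner ℂ b c : ℂ)‖^2 + ‖(inner ℂ c a : ℂ)‖^2 - 1)^2
        ≥ 4 * ‖(inner ℂ a b : ℂ)‖^2 * ‖(inner ℂ b c : ℂ)‖^2 * ‖(inner ℂ c a : ℂ)‖^2) :
    ∃ f : Fin 3 → E, Orthonormal ℂ f ∧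
      (∀ i, f i ∈ Submodule.span ℂ ({a, b, c} : Set E)) ∧
      (inner ℂ (f 0) a : ℂ) = 0 ∧ (inner ℂ (f 1) b : ℂ) = 0 ∧ (inner ℂ (f 2) c : ℂ) = 0 := by
  obtain ⟨u, v, g, hu, hu1, hv, hg, hbu, hcv, hrg⟩ :=
    exists_params_of_overlap_inequalities (by positivity) (by positivity) (by positivity) h1 h2
  obtain ⟨a', b', c', ha'0, hb'1, hc'2, ha', hb', hc', hab, hbc, hca⟩ :=
    exists_model_of_params (inner ℂ a b) (inner ℂ b c) (inner ℂ c a) hu hu1 hv hg hbu hcv hrg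
  have hrange : Set.range ![a, b, c] = {a, b, c} := by
    rw [Matrix.range_cons, Matrix.range_cons_cons_empty, Set.singleton_union]
  have hli : LinearIndependent ℂ ![a, b, c] := by
    rw [linearIndependent_iff_card_eq_finrank_span, Set.finrank, hrange, hspan, Fintype.card_fin]
  obtain ⟨f, hf, hmem, hinner⟩ := hli.exists_orthonormal_inner_eq (w := ![a', b', c'])
    (inner_triple_eq_of_norm_eq_of_inner_eq (ha'.trans ha.symm) (hb'.trans hb.symm)
      (hc'.trans hc.symm) hab hbc hca)
  exact ⟨f, hf, hrange ▸ hmem, (hinner 0 0).trans ha'0, (hinner 1 1).trans hb'1,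
    (hinner 2 2).trans hc'2⟩

theorem pp_incompatible_of_overlap_inequalities
    (E : Type) [NormedAddCommGroup E] [InnerProductSpace ℂ E] [FiniteDimensional ℂ E]
    (a b c : E) (ha : ‖a‖ = 1) (hb : ‖b‖ = 1) (hc : ‖c‖ = 1)
    (hspan : Module.finrank ℂ (Submodule.span ℂ ({a, b, c} : Set E)) = 3)
    (h1 : ‖(inner ℂ a b : ℂ)‖^2 + ‖(inner ℂ b c : ℂ)‖^2 + ‖(inner ℂ c a : ℂ)‖^2 < 1)
    (h2 : (‖(inner ℂ a b : ℂ)‖^2 + ‖(inner ℂ b c : ℂ)‖^2 + ‖(inner ℂ c a : ℂ)‖^2 - 1)^2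
        ≥ 4 * ‖(inner ℂ a b : ℂ)‖^2 * ‖(inner ℂ b c : ℂ)‖^2 * ‖(inner ℂ c a : ℂ)‖^2) :
    ∃ f : Fin 3 → E, Orthonormal ℂ f ∧
      (∀ i, f i ∈ Submodule.span ℂ ({a, b, c} : Set E)) ∧
      (inner ℂ (f 0) a : ℂ) = 0 ∧ (inner ℂ (f 1) b : ℂ) = 0 ∧ (inner ℂ (f 2) c : ℂ) = 0 :=
  pp_incompatible_of_overlap_inequalities_general E a b c ha hb hc hspan h1 h2
end

section
/- If three unit vectors a, b, c span a 3-dimensional subspace and there is an orthonormal basis {f₁, f₂, f₃} of that subspace with ⟨f₁|a⟩ = ⟨f₂|b⟩ = ⟨f₃|c⟩ = 0, then with x₁ = |⟨a|b⟩|², x₂ = |⟨b|c⟩|², x₃ = |⟨c|a⟩|², we have x₁ + x₂ + x₃ < 1 and (x₁ + x₂ + x₃ − 1)² ≥ 4x₁x₂x₃. -/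
/-!
Expand `a`, `b`, `c` in the orthonormal basis `f`: the hypotheses say
`a = α₁ f₁ + α₂ f₂`, `b = β₀ f₀ + β₂ f₂`, `c = γ₀ f₀ + γ₁ f₁`, so that
`x₁ = |α₂|²|β₂|²`, `x₂ = |β₀|²|γ₀|²`, `x₃ = |γ₁|²|α₁|²`. With `A = |α₁β₂γ₀|²` and `B = |α₂β₀γ₁|²`,
the normalisations `|α₁|² + |α₂|² = 1`, ... give `1 - Σ xᵢ = A + B` and
`(Σ xᵢ - 1)² - 4 x₁x₂x₃ = (A - B)²`. Finally `A + B > 0`, because `α₁β₂γ₀ + α₂β₀γ₁` is the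
determinant of the coordinate matrix of `(a, b, c)`, which is nonzero since the three vectors
are linearly independent.
-/

open Submodule Module

section Orthonormal

variable {𝕜 E ι : Type*} [RCLike 𝕜] [NormedAddCommGroup E] [InnerProductSpace 𝕜 E] [Fintype ι]
  {f : ι → E}

theorem Orthonormal.sum_inner_smul_eq_of_mem_span (hf : Orthonormal 𝕜 f) {x : E}
    (hx : x ∈ span 𝕜 (Set.range f)) : ∑ i, inner 𝕜 (f i) x • f i = x := by
  obtain ⟨c, rfl⟩ := mem_span_range_iff_exists_fun 𝕜 |>.1 hx
  simp only [hf.inner_right_fintype]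

theorem Orthonormal.inner_eq_sum_of_mem_span (hf : Orthonormal 𝕜 f) {x : E}
    (hx : x ∈ span 𝕜 (Set.range f)) (y : E) :
    inner 𝕜 x y = ∑ i, starRingEnd 𝕜 (inner 𝕜 (f i) x) * inner 𝕜 (f i) y := by
  conv_lhs => rw [← hf.sum_inner_smul_eq_of_mem_span hx]
  simp only [sum_inner, inner_smul_left]

theorem Orthonormal.norm_sq_eq_sum_of_mem_span (hf : Orthonormal 𝕜 f) {x : E}
    (hx : x ∈ span 𝕜 (Set.range f)) : ‖x‖ ^ 2 = ∑ i, ‖inner 𝕜 (f i) x‖ ^ 2 := by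
  have h := hf.inner_eq_sum_of_mem_span hx x
  simp only [inner_self_eq_norm_sq_to_K, RCLike.conj_mul] at h
  exact_mod_cast h

end Orthonormal

theorem LinearIndependent.span_range_eq_of_finrank_eq {K V ι : Type*} [DivisionRing K]
    [AddCommGroup V] [Module K V] [Fintype ι] [Nonempty ι] {f : ι → V} (hf : LinearIndependent K f)
    {S : Submodule K V} (hfS : ∀ i, f i ∈ S) (hS : finrank K S = Fintype.card ι) :
    span K (Set.range f) = S :=
  have : FiniteDimensional K S := .of_finrank_pos (hS ▸ Fintype.card_pos)
  eq_of_le_of_finrank_eq (span_le.2 (Set.range_subset_iff.2 hfS))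
    (by rw [finrank_span_eq_card hf, hS])

theorem linearIndependent_fin3_of_finrank_span_eq_three {K V : Type*} [DivisionRing K]
    [AddCommGroup V] [Module K V] {a b c : V} (h : finrank K (span K ({a, b, c} : Set V)) = 3) :
    LinearIndependent K ![a, b, c] := by
  rw [linearIndependent_iff_card_eq_finrank_span, Matrix.range_cons, Matrix.range_cons_cons_empty,
    Set.singleton_union, Set.finrank, h, Fintype.card_fin]

theorem Matrix.det_ne_zero_of_linearIndependent {K V ι : Type*} [Field K] [AddCommGroup V]
    [Module K V] [Fintype ι] [DecidableEq ι] {v f : ι → V} (M : Matrix ι ι K)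
    (hv : ∀ k, v k = ∑ i, M k i • f i) (hli : LinearIndependent K v) : M.det ≠ 0 := by
  intro hdet
  obtain ⟨w, hw0, hw⟩ := Matrix.exists_vecMul_eq_zero_iff.2 hdet
  refine hw0 (funext (Fintype.linearIndependent_iff.1 hli w ?_))
  calc ∑ k, w k • v k = ∑ i, Matrix.vecMul w M i • f i := by
        simp only [hv, Finset.smul_sum, smul_smul, Matrix.vecMul, dotProduct, Finset.sum_smul]
        exact Finset.sum_comm
    _ = 0 := by simp [hw]

theorem Orthonormal.det_inner_ne_zero {𝕜 E ι : Type*} [RCLike 𝕜] [NormedAddCommGroup E]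
    [InnerProductSpace 𝕜 E] [Fintype ι] [DecidableEq ι] {f v : ι → E} (hf : Orthonormal 𝕜 f)
    (hv : ∀ k, v k ∈ span 𝕜 (Set.range f)) (hli : LinearIndependent 𝕜 v) :
    (Matrix.of fun k i => inner 𝕜 (f i) (v k)).det ≠ 0 :=
  Matrix.det_ne_zero_of_linearIndependent _
    (fun k => (hf.sum_inner_smul_eq_of_mem_span (hv k)).symm) hli

theorem norm_sq_add_norm_sq_pos_of_add_ne_zero {G : Type*} [NormedAddCommGroup G] {z w : G}
    (h : z + w ≠ 0) : 0 < ‖z‖ ^ 2 + ‖w‖ ^ 2 := by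
  contrapose! h
  have hz : ‖z‖ ^ 2 = 0 := le_antisymm (by nlinarith [sq_nonneg ‖w‖]) (sq_nonneg _)
  have hw : ‖w‖ ^ 2 = 0 := le_antisymm (by nlinarith [sq_nonneg ‖z‖]) (sq_nonneg _)
  simp_all

theorem sum_lt_one_and_sq_ge_of_coords {s₁ s₂ t₀ t₂ u₀ u₁ : ℝ} (hs : s₁ + s₂ = 1)
    (ht : t₀ + t₂ = 1) (hu : u₀ + u₁ = 1) (hpos : 0 < s₁ * t₂ * u₀ + s₂ * t₀ * u₁) :
    s₂ * t₂ + t₀ * u₀ + u₁ * s₁ < 1 ∧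
      (s₂ * t₂ + t₀ * u₀ + u₁ * s₁ - 1) ^ 2 ≥ 4 * (s₂ * t₂) * (t₀ * u₀) * (u₁ * s₁) := by
  obtain rfl : s₂ = 1 - s₁ := by linarith
  obtain rfl : t₂ = 1 - t₀ := by linarith
  obtain rfl : u₁ = 1 - u₀ := by linarith
  constructor
  · nlinarith
  · nlinarith [sq_nonneg (s₁ * (1 - t₀) * u₀ - (1 - s₁) * t₀ * (1 - u₀))]

theorem overlap_inequalities_of_pp_incompatible_general
    (E : Type) [NormedAddCommGroup E] [InnerProductSpace ℂ E]
    (a b c : E) (ha : ‖a‖ = 1) (hb : ‖b‖ = 1) (hc : ‖c‖ = 1)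
    (hspan : Module.finrank ℂ (Submodule.span ℂ ({a, b, c} : Set E)) = 3)
    (f : Fin 3 → E) (hf : Orthonormal ℂ f)
    (hfspan : ∀ i, f i ∈ Submodule.span ℂ ({a, b, c} : Set E))
    (hf1 : (inner ℂ (f 0) a : ℂ) = 0) (hf2 : (inner ℂ (f 1) b : ℂ) = 0)
    (hf3 : (inner ℂ (f 2) c : ℂ) = 0) :
    ‖(inner ℂ a b : ℂ)‖^2 + ‖(inner ℂ b c : ℂ)‖^2 + ‖(inner ℂ c a : ℂ)‖^2 < 1 ∧
    (‖(inner ℂ a b : ℂ)‖^2 + ‖(inner ℂ b c : ℂ)‖^2 + ‖(inner ℂ c a : ℂ)‖^2 - 1)^2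
      ≥ 4 * ‖(inner ℂ a b : ℂ)‖^2 * ‖(inner ℂ b c : ℂ)‖^2 * ‖(inner ℂ c a : ℂ)‖^2 := by
  have hS := hf.linearIndependent.span_range_eq_of_finrank_eq hfspan hspan
  have ha' : a ∈ span ℂ (Set.range f) := hS ▸ subset_span (by simp)
  have hb' : b ∈ span ℂ (Set.range f) := hS ▸ subset_span (by simp)
  have hc' : c ∈ span ℂ (Set.range f) := hS ▸ subset_span (by simp)
  have hdet := hf.det_inner_ne_zero (fun k => by fin_cases k <;> assumption)
    (linearIndependent_fin3_of_finrank_span_eq_three hspan)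
  have hpos := norm_sq_add_norm_sq_pos_of_add_ne_zero
    (by simpa [Matrix.det_fin_three, hf1, hf2, hf3] using hdet)
  have hab : ‖(inner ℂ a b : ℂ)‖ ^ 2 =
      ‖(inner ℂ (f 2) a : ℂ)‖ ^ 2 * ‖(inner ℂ (f 2) b : ℂ)‖ ^ 2 := by
    rw [hf.inner_eq_sum_of_mem_span ha', Fin.sum_univ_three]
    simp [hf1, hf2, mul_pow, norm_inner_symm a]
  have hbc : ‖(inner ℂ b c : ℂ)‖ ^ 2 =
      ‖(inner ℂ (f 0) b : ℂ)‖ ^ 2 * ‖(inner ℂ (f 0) c : ℂ)‖ ^ 2 := by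
    rw [hf.inner_eq_sum_of_mem_span hb', Fin.sum_univ_three]
    simp [hf2, hf3, mul_pow, norm_inner_symm b]
  have hca : ‖(inner ℂ c a : ℂ)‖ ^ 2 =
      ‖(inner ℂ (f 1) c : ℂ)‖ ^ 2 * ‖(inner ℂ (f 1) a : ℂ)‖ ^ 2 := by
    rw [hf.inner_eq_sum_of_mem_span hc', Fin.sum_univ_three]
    simp [hf3, hf1, mul_pow, norm_inner_symm c]
  have hna : ‖(inner ℂ (f 1) a : ℂ)‖ ^ 2 + ‖(inner ℂ (f 2) a : ℂ)‖ ^ 2 = 1 := by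
    simpa [ha, Fin.sum_univ_three, hf1] using (hf.norm_sq_eq_sum_of_mem_span ha').symm
  have hnb : ‖(inner ℂ (f 0) b : ℂ)‖ ^ 2 + ‖(inner ℂ (f 2) b : ℂ)‖ ^ 2 = 1 := by
    simpa [hb, Fin.sum_univ_three, hf2] using (hf.norm_sq_eq_sum_of_mem_span hb').symm
  have hnc : ‖(inner ℂ (f 0) c : ℂ)‖ ^ 2 + ‖(inner ℂ (f 1) c : ℂ)‖ ^ 2 = 1 := by
    simpa [hc, Fin.sum_univ_three, hf3] using (hf.norm_sq_eq_sum_of_mem_span hc').symm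
  simp only [norm_mul, mul_pow] at hpos
  rw [hab, hbc, hca]
  exact sum_lt_one_and_sq_ge_of_coords hna hnb hnc hpos

theorem overlap_inequalities_of_pp_incompatible
    (E : Type) [NormedAddCommGroup E] [InnerProductSpace ℂ E] [FiniteDimensional ℂ E]
    (a b c : E) (ha : ‖a‖ = 1) (hb : ‖b‖ = 1) (hc : ‖c‖ = 1)
    (hspan : Module.finrank ℂ (Submodule.span ℂ ({a, b, c} : Set E)) = 3)
    (f : Fin 3 → E) (hf : Orthonormal ℂ f)
    (hfspan : ∀ i, f i ∈ Submodule.span ℂ ({a, b, c} : Set E))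
    (hf1 : (inner ℂ (f 0) a : ℂ) = 0) (hf2 : (inner ℂ (f 1) b : ℂ) = 0)
    (hf3 : (inner ℂ (f 2) c : ℂ) = 0) :
    ‖(inner ℂ a b : ℂ)‖^2 + ‖(inner ℂ b c : ℂ)‖^2 + ‖(inner ℂ c a : ℂ)‖^2 < 1 ∧
    (‖(inner ℂ a b : ℂ)‖^2 + ‖(inner ℂ b c : ℂ)‖^2 + ‖(inner ℂ c a : ℂ)‖^2 - 1)^2
      ≥ 4 * ‖(inner ℂ a b : ℂ)‖^2 * ‖(inner ℂ b c : ℂ)‖^2 * ‖(inner ℂ c a : ℂ)‖^2 :=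
  overlap_inequalities_of_pp_incompatible_general E a b c ha hb hc hspan f hf hfspan hf1 hf2 hf3
end

section
/- Let μ₁, μ₂, μ₃ be probability distributions on a finite set Λ and ξ₁, ξ₂, ξ₃, ξ₄ : Λ → [0,1] with ξ₁+ξ₂+ξ₃+ξ₄ = 1 pointwise. If ∑_λ ξ₁(λ)μ₁(λ) = ∑_λ ξ₂(λ)μ₂(λ) = ∑_λ ξ₃(λ)μ₃(λ) = 0 and ∑_λ ξ₄(λ)μᵢ(λ) = 0 for i = 1,2,3, then there is no λ ∈ Λ with μ₁(λ) > 0, μ₂(λ) > 0 and μ₃(λ) > 0; equivalently ∑_λ min(μ₁(λ), μ₂(λ), μ₃(λ)) = 0. -/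
/-!
At a point `l` where `μ₁, μ₂, μ₃` are all positive, each vanishing sum `∑ ξⱼ μᵢ` of nonnegative
terms forces `ξⱼ l = 0` for `j = 1, 2, 3, 4` (for `ξ₄` use `μ₁`), contradicting
`ξ₁ l + ξ₂ l + ξ₃ l + ξ₄ l = 1`.
-/

open Finset

lemma eq_zero_of_sum_mul_eq_zero_of_pos {ι R : Type*} [Fintype ι] [Semiring R] [PartialOrder R]
    [IsOrderedRing R] [NoZeroDivisors R] {f g : ι → R} (hf : ∀ i, 0 ≤ f i) (hg : ∀ i, 0 ≤ g i)
    (h : ∑ i, f i * g i = 0) {i : ι} (hi : 0 < g i) : f i = 0 := by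
  have hterm : f i * g i = 0 :=
    (sum_eq_zero_iff_of_nonneg fun j _ => mul_nonneg (hf j) (hg j)).mp h i (mem_univ i)
  exact (mul_eq_zero.mp hterm).resolve_right hi.ne'

lemma sum_min_min_eq_zero {ι R : Type*} [Fintype ι] [AddCommMonoid R] [LinearOrder R]
    {a b c : ι → R} (ha : ∀ i, 0 ≤ a i) (hb : ∀ i, 0 ≤ b i) (hc : ∀ i, 0 ≤ c i)
    (h : ¬ ∃ i, 0 < a i ∧ 0 < b i ∧ 0 < c i) : ∑ i, min (a i) (min (b i) (c i)) = 0 := by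
  refine sum_eq_zero fun i _ => le_antisymm ?_ (le_min (ha i) (le_min (hb i) (hc i)))
  by_contra! hpos
  simp only [lt_min_iff] at hpos
  exact h ⟨i, hpos.1, hpos.2.1, hpos.2.2⟩

theorem triple_support_empty_general
    (Λ : Type) [Fintype Λ]
    (μ₁ μ₂ μ₃ : Λ → ℝ) (ξ₁ ξ₂ ξ₃ ξ₄ : Λ → ℝ)
    (hμ₁ : ∀ l, 0 ≤ μ₁ l) (hμ₂ : ∀ l, 0 ≤ μ₂ l) (hμ₃ : ∀ l, 0 ≤ μ₃ l)
    (hξ₁ : ∀ l, 0 ≤ ξ₁ l) (hξ₂ : ∀ l, 0 ≤ ξ₂ l)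
    (hξ₃ : ∀ l, 0 ≤ ξ₃ l) (hξ₄ : ∀ l, 0 ≤ ξ₄ l)
    (hsum : ∀ l, ξ₁ l + ξ₂ l + ξ₃ l + ξ₄ l = 1)
    (h1 : ∑ l, ξ₁ l * μ₁ l = 0) (h2 : ∑ l, ξ₂ l * μ₂ l = 0)
    (h3 : ∑ l, ξ₃ l * μ₃ l = 0)
    (h4 : ∀ i : Fin 3, ∑ l, ξ₄ l * ![μ₁, μ₂, μ₃] i l = 0) :
    (¬ ∃ l, 0 < μ₁ l ∧ 0 < μ₂ l ∧ 0 < μ₃ l) ∧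
    ∑ l, min (μ₁ l) (min (μ₂ l) (μ₃ l)) = 0 := by
  have hdisjoint : ¬ ∃ l, 0 < μ₁ l ∧ 0 < μ₂ l ∧ 0 < μ₃ l := by
    rintro ⟨l, p₁, p₂, p₃⟩
    have z₁ := eq_zero_of_sum_mul_eq_zero_of_pos hξ₁ hμ₁ h1 p₁
    have z₂ := eq_zero_of_sum_mul_eq_zero_of_pos hξ₂ hμ₂ h2 p₂
    have z₃ := eq_zero_of_sum_mul_eq_zero_of_pos hξ₃ hμ₃ h3 p₃
    have z₄ := eq_zero_of_sum_mul_eq_zero_of_pos hξ₄ hμ₁ (h4 0) p₁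
    have := hsum l
    rw [z₁, z₂, z₃, z₄] at this
    norm_num at this
  exact ⟨hdisjoint, sum_min_min_eq_zero hμ₁ hμ₂ hμ₃ hdisjoint⟩

theorem triple_support_empty
    (Λ : Type) [Fintype Λ]
    (μ₁ μ₂ μ₃ : Λ → ℝ) (ξ₁ ξ₂ ξ₃ ξ₄ : Λ → ℝ)
    (hμ₁ : ∀ l, 0 ≤ μ₁ l) (hμ₂ : ∀ l, 0 ≤ μ₂ l) (hμ₃ : ∀ l, 0 ≤ μ₃ l)
    (hμ₁1 : ∑ l, μ₁ l = 1) (hμ₂1 : ∑ l, μ₂ l = 1) (hμ₃1 : ∑ l, μ₃ l = 1)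
    (hξ₁ : ∀ l, 0 ≤ ξ₁ l) (hξ₂ : ∀ l, 0 ≤ ξ₂ l)
    (hξ₃ : ∀ l, 0 ≤ ξ₃ l) (hξ₄ : ∀ l, 0 ≤ ξ₄ l)
    (hsum : ∀ l, ξ₁ l + ξ₂ l + ξ₃ l + ξ₄ l = 1)
    (h1 : ∑ l, ξ₁ l * μ₁ l = 0) (h2 : ∑ l, ξ₂ l * μ₂ l = 0)
    (h3 : ∑ l, ξ₃ l * μ₃ l = 0)
    (h4 : ∀ i : Fin 3, ∑ l, ξ₄ l * ![μ₁, μ₂, μ₃] i l = 0) :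
    (¬ ∃ l, 0 < μ₁ l ∧ 0 < μ₂ l ∧ 0 < μ₃ l) ∧
    ∑ l, min (μ₁ l) (min (μ₂ l) (μ₃ l)) = 0 :=
  triple_support_empty_general Λ μ₁ μ₂ μ₃ ξ₁ ξ₂ ξ₃ ξ₄ hμ₁ hμ₂ hμ₃ hξ₁ hξ₂ hξ₃ hξ₄ hsum h1 h2 h3 h4
end

section
/- Let Λ be a finite set, μ_c a probability distribution on Λ, and let S^γ_i ⊆ Λ for γ, i ∈ {1,…,d} be sets such that: (i) for each γ and i ≠ j, S^γ_i ∩ S^γ_j = ∅; (ii) for α ≠ β and any i, j, S^α_i ∩ S^β_j ∩ supp(μ_c) = ∅; (iii) for all γ, i, ∑_{λ ∈ S^γ_i} μ_c(λ) ≥ k(1 − √(1 − 1/d)). Then k ≤ (1/d)(1 + √(1 − 1/d)), hence k < 2/d. -/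
/-!
A point of positive mass lies in at most one of the `d²` sets `S^γ_i`, so their masses add up to
at most `1`. With `s = √(1 - 1/d)` this gives `d² k (1 - s) ≤ 1`, and since
`(1 - s)(1 + s) = 1/d`, it rearranges to `k ≤ (1 + s)/d < 2/d`.
-/

open Finset

theorem Finset.sum_sum_le_sum_of_inter_eq_zero {ι α : Type*} [Fintype α] [DecidableEq α]
    (s : Finset ι) (S : ι → Finset α) (μ : α → ℝ) (hμ : ∀ l, 0 ≤ μ l)
    (h : ∀ i ∈ s, ∀ j ∈ s, i ≠ j → ∀ l ∈ S i ∩ S j, μ l = 0) :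
    ∑ i ∈ s, ∑ l ∈ S i, μ l ≤ ∑ l, μ l := by
  set T := univ.filter fun l => μ l ≠ 0
  have hrestrict (i : ι) : ∑ l ∈ S i, μ l = ∑ l ∈ S i ∩ T, μ l := by
    rw [inter_filter, inter_univ, sum_filter_ne_zero]
  have hdisj : (s : Set ι).PairwiseDisjoint fun i => S i ∩ T := by
    intro i hi j hj hij
    refine disjoint_left.mpr fun l hli hlj => ?_
    simp only [T, mem_inter, mem_filter] at hli hlj
    exact hli.2.2 (h i hi j hj hij l (mem_inter.mpr ⟨hli.1, hlj.1⟩))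
  calc ∑ i ∈ s, ∑ l ∈ S i, μ l = ∑ l ∈ s.biUnion fun i => S i ∩ T, μ l := by
        rw [sum_biUnion hdisj]; exact sum_congr rfl fun i _ => hrestrict i
    _ ≤ ∑ l, μ l := sum_le_univ_sum_of_nonneg hμ

theorem le_one_div_mul_one_add_sqrt_of_sq_mul_le_one {d : ℕ} (hd : 1 ≤ d) {k : ℝ}
    (h : (d : ℝ) ^ 2 * (k * (1 - √(1 - 1 / d))) ≤ 1) :
    k ≤ 1 / d * (1 + √(1 - 1 / d)) ∧ k < 2 / d := by
  set s := √(1 - 1 / d)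
  have hd₀ : (0 : ℝ) < d := by exact_mod_cast hd
  have hinv_pos : 0 < 1 / (d : ℝ) := by positivity
  have hinv_le : 1 / (d : ℝ) ≤ 1 := by rw [div_le_one hd₀]; exact_mod_cast hd
  have hs₀ : 0 ≤ s := Real.sqrt_nonneg _
  have hs_sq : s ^ 2 = 1 - 1 / d := Real.sq_sqrt (by linarith)
  have hs₁ : s < 1 := by nlinarith
  have hconj : (1 - s) * (1 + s) = 1 / d := by linear_combination -hs_sq
  have hbound : k ≤ 1 / d * (1 + s) := by
    have : (d : ℝ) * k ≤ 1 + s :=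
      calc (d : ℝ) * k = (d : ℝ) ^ 2 * (k * ((1 - s) * (1 + s))) := by
            rw [hconj]; field_simp
        _ = (d : ℝ) ^ 2 * (k * (1 - s)) * (1 + s) := by ring
        _ ≤ 1 * (1 + s) := by gcongr
        _ = 1 + s := one_mul _
    rw [one_div_mul_eq_div, le_div_iff₀ hd₀]
    linarith
  refine ⟨hbound, hbound.trans_lt ?_⟩
  calc 1 / d * (1 + s) < 1 / d * 2 := by gcongr; linarith
    _ = 2 / d := by ring

theorem combinatorial_core_bound
    (Λ : Type) [Fintype Λ] [DecidableEq Λ]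
    (d : ℕ) (hd : 1 ≤ d) (k : ℝ)
    (μc : Λ → ℝ) (hμc : ∀ l, 0 ≤ μc l) (hμc1 : ∑ l, μc l = 1)
    (S : Fin d → Fin d → Finset Λ)
    (hdisj : ∀ γ : Fin d, ∀ i j : Fin d, i ≠ j → S γ i ∩ S γ j = ∅)
    (htriple : ∀ α β : Fin d, α ≠ β → ∀ i j : Fin d,
      ∀ l ∈ S α i ∩ S β j, ¬ (0 < μc l))
    (hlower : ∀ γ i : Fin d, ∑ l ∈ S γ i, μc l ≥ k * (1 - Real.sqrt (1 - 1 / d))) :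
    k ≤ (1 / d) * (1 + Real.sqrt (1 - 1 / d)) ∧ k < 2 / d := by
  have hnull : ∀ p ∈ (univ : Finset (Fin d × Fin d)), ∀ q ∈ univ, p ≠ q →
      ∀ l ∈ S p.1 p.2 ∩ S q.1 q.2, μc l = 0 := by
    rintro ⟨γ, i⟩ - ⟨γ', j⟩ - hpq l hl
    by_cases hγ : γ = γ'
    · subst hγ
      have hij : i ≠ j := fun hij => hpq (by rw [hij])
      simp [hdisj γ i j hij] at hl
    · exact le_antisymm (not_lt.mp (htriple γ γ' hγ i j l hl)) (hμc l)
  have htotal : ∑ p : Fin d × Fin d, ∑ l ∈ S p.1 p.2, μc l ≤ 1 :=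
    hμc1 ▸ sum_sum_le_sum_of_inter_eq_zero _ _ μc hμc hnull
  have hmass : (d : ℝ) ^ 2 * (k * (1 - √(1 - 1 / d))) ≤ ∑ p : Fin d × Fin d, ∑ l ∈ S p.1 p.2, μc l := by
    simpa [sq] using card_nsmul_le_sum univ _ _ fun (p : Fin d × Fin d) _ => hlower p.1 p.2
  exact le_one_div_mul_one_add_sqrt_of_sq_mul_le_one hd (hmass.trans htotal)
end

section
/- Let Λ be a finite set, μ_c and μ^α_i (α, i ∈ {1,…,d}) probability distributions on Λ. Then ∑_{α,i} ∑_λ min(μ_c(λ), μ^α_i(λ)) ≤ 1 + ∑_{α<β} ∑_{i,j} ∑_λ min(μ_c(λ), μ^α_i(λ), μ^β_j(λ)) + ∑_α ∑_{i<j} ∑_λ min(μ^α_i(λ), μ^α_j(λ)). -/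
/-!
Fix a point `λ` and put `a = μc λ`, `b_{αi} = μ^α_i λ`. The numbers `y_{αi} = min a b_{αi}` are
the lengths of the nested intervals `[0, y_{αi}] ⊆ [0, a]`, so a union bound with pairwise
corrections holds: ordering the indices `(α, i)` lexicographically and letting `m` be an index
where `y` is maximal, `y_p = min y_p y_m` for `p ≠ m`, so the sum of all `y_p` is at most
`y_m ≤ a` plus the sum of pairwise minima. The pairs with `α < β` give the middle sum of the
theorem, those with `α = β` are bounded by the last one, and summing over `λ` turns `a` into
`∑ λ, μc λ = 1`.
-/

open Finset

theorem sum_eq_sum_lt_add_add_sum_gt {ι M : Type*} [Fintype ι] [LinearOrder ι]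
    [AddCommMonoid M] (m : ι) (g : ι → M) :
    ∑ p, g p = ∑ p with p < m, g p + (g m + ∑ p with m < p, g p) := by
  have hge : ({p | ¬p < m} : Finset ι) = cons m {p | m < p} (by simp) := by
    ext p
    simp [le_iff_eq_or_lt, eq_comm]
  rw [← sum_filter_add_sum_filter_not univ (· < m), hge, sum_cons]

theorem sum_le_add_sum_lt_min {ι : Type*} [Fintype ι] [LinearOrder ι] {y : ι → ℝ} {a : ℝ}
    (ha : 0 ≤ a) (hy : ∀ p, 0 ≤ y p) (hya : ∀ p, y p ≤ a) :
    ∑ p, y p ≤ a + ∑ p, ∑ q with p < q, min (y p) (y q) := by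
  rcases isEmpty_or_nonempty ι with hι | hι
  · simpa using ha
  obtain ⟨m, -, hm⟩ := exists_max_image univ y univ_nonempty
  set pairs : ι → ℝ := fun p => ∑ q with p < q, min (y p) (y q)
  have hpairs : ∀ p, 0 ≤ pairs p := fun p => sum_nonneg fun q _ => le_min (hy p) (hy q)
  have below : ∑ p with p < m, y p ≤ ∑ p with p < m, pairs p := by
    refine sum_le_sum fun p hp => ?_
    calc y p = min (y p) (y m) := (min_eq_left (hm p (mem_univ p))).symm
      _ ≤ pairs p := single_le_sum (f := fun q => min (y p) (y q))
            (fun q _ => le_min (hy p) (hy q)) (mem_filter.2 ⟨mem_univ m, (mem_filter.1 hp).2⟩)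
  have above : ∑ q with m < q, y q = pairs m :=
    sum_congr rfl fun q _ => (min_eq_right (hm q (mem_univ q))).symm
  calc ∑ p, y p = ∑ p with p < m, y p + (y m + ∑ q with m < q, y q) :=
        sum_eq_sum_lt_add_add_sum_gt m y
    _ ≤ ∑ p with p < m, pairs p + (a + pairs m) := by
        gcongr
        exacts [hya m, above.le]
    _ ≤ a + ∑ p, pairs p := by
        rw [sum_eq_sum_lt_add_add_sum_gt m pairs]
        linarith [sum_nonneg fun p (_ : p ∈ ({p | m < p} : Finset ι)) => hpairs p]

theorem sum_sum_toLex_lt {κ ι M : Type*} [Fintype κ] [LinearOrder κ] [LocallyFiniteOrderTop κ]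
    [Fintype ι] [LinearOrder ι] [LocallyFiniteOrderTop ι] [AddCommMonoid M]
    (f : κ × ι → κ × ι → M) :
    ∑ p, ∑ q with toLex p < toLex q, f p q
      = ∑ α, ∑ β ∈ Ioi α, ∑ i, ∑ j, f (α, i) (β, j) + ∑ α, ∑ i, ∑ j ∈ Ioi i, f (α, i) (α, j) := by
  have split : ∀ α i β, ∑ j, (if α < β ∨ α = β ∧ i < j then f (α, i) (β, j) else 0)
      = (if α < β then ∑ j, f (α, i) (β, j) else 0)
        + if α = β then ∑ j ∈ Ioi i, f (α, i) (β, j) else 0 := by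
    intro α i β
    rcases lt_trichotomy α β with h | rfl | h
    · simp [h, h.ne]
    · simp [← filter_lt_eq_Ioi, sum_filter]
    · simp [h.not_gt, h.ne']
  simp only [Fintype.sum_prod_type, sum_filter, Prod.Lex.toLex_lt_toLex, split, sum_add_distrib,
    sum_ite_eq, mem_univ, if_true]
  congr 1
  refine sum_congr rfl fun α _ => ?_
  rw [sum_comm]
  simp only [sum_ite_irrel, sum_const_zero]
  rw [← filter_lt_eq_Ioi, sum_filter]

theorem sum_min_le_add_sum_min_pairs {κ ι : Type*} [Fintype κ] [LinearOrder κ]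
    [LocallyFiniteOrderTop κ] [Fintype ι] [LinearOrder ι] [LocallyFiniteOrderTop ι]
    {a : ℝ} (ha : 0 ≤ a) {b : κ → ι → ℝ} (hb : ∀ α i, 0 ≤ b α i) :
    ∑ α, ∑ i, min a (b α i)
      ≤ a + (∑ α, ∑ β ∈ Ioi α, ∑ i, ∑ j, min a (min (b α i) (b β j))
        + ∑ α, ∑ i, ∑ j ∈ Ioi i, min (b α i) (b α j)) := by
  have hlex := sum_le_add_sum_lt_min (ι := κ ×ₗ ι)
    (y := fun p => min a (b (ofLex p).1 (ofLex p).2))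
    ha (fun p => le_min ha (hb _ _)) fun p => min_le_left _ _
  have hsplit := sum_sum_toLex_lt fun p q : κ × ι => min a (min (b p.1 p.2) (b q.1 q.2))
  simp only [min_min_min_comm, min_self] at hlex
  rw [← Fintype.sum_prod_type']
  calc _ ≤ a + ∑ p : κ × ι, ∑ q with toLex p < toLex q, min a (min (b p.1 p.2) (b q.1 q.2)) :=
        hlex
    _ = a + (∑ α, ∑ β ∈ Ioi α, ∑ i, ∑ j, min a (min (b α i) (b β j))
        + ∑ α, ∑ i, ∑ j ∈ Ioi i, min a (min (b α i) (b α j))) := by rw [hsplit]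
    _ ≤ _ := by
        gcongr _ + (_ + ∑ α : κ, ∑ i : ι, ∑ j ∈ Ioi i, ?_)
        exact min_le_right _ _

theorem bonferroni_overlap_inequality_general
    (Λ : Type) [Fintype Λ] (d : ℕ)
    (μc : Λ → ℝ) (μ : Fin d → Fin d → Λ → ℝ)
    (hμc : ∀ l, 0 ≤ μc l) (hμc1 : ∑ l, μc l = 1)
    (hμ : ∀ α i l, 0 ≤ μ α i l) :
    ∑ α : Fin d, ∑ i : Fin d, ∑ l, min (μc l) (μ α i l)
      ≤ 1
        + ∑ α : Fin d, ∑ β ∈ Finset.Ioi α, ∑ i : Fin d, ∑ j : Fin d,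
            ∑ l, min (μc l) (min (μ α i l) (μ β j l))
        + ∑ α : Fin d, ∑ i : Fin d, ∑ j ∈ Finset.Ioi i,
            ∑ l, min (μ α i l) (μ α j l) := by
  have pointwise := sum_le_sum fun l (_ : l ∈ univ) =>
    sum_min_le_add_sum_min_pairs (hμc l) (b := fun α i => μ α i l) fun α i => hμ α i l
  simp only [sum_add_distrib, hμc1] at pointwise
  simp only [sum_comm (t := (univ : Finset Λ))]
  linarith

theorem bonferroni_overlap_inequality
    (Λ : Type) [Fintype Λ] (d : ℕ)
    (μc : Λ → ℝ) (μ : Fin d → Fin d → Λ → ℝ)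
    (hμc : ∀ l, 0 ≤ μc l) (hμc1 : ∑ l, μc l = 1)
    (hμ : ∀ α i l, 0 ≤ μ α i l) (hμ1 : ∀ α i, ∑ l, μ α i l = 1) :
    ∑ α : Fin d, ∑ i : Fin d, ∑ l, min (μc l) (μ α i l)
      ≤ 1
        + ∑ α : Fin d, ∑ β ∈ Finset.Ioi α, ∑ i : Fin d, ∑ j : Fin d,
            ∑ l, min (μc l) (min (μ α i l) (μ β j l))
        + ∑ α : Fin d, ∑ i : Fin d, ∑ j ∈ Finset.Ioi i,
            ∑ l, min (μ α i l) (μ α j l) :=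
  bonferroni_overlap_inequality_general Λ d μc μ hμc hμc1 hμ
end

section
/- Suppose for a d-dimensional quantum system (d ≥ 4 a prime power) an ontological model on a finite ontic space Λ exactly reproduces the Born rule for d+1 mutually unbiased bases and for the PP-incompatibility measurements on all triples (e^α_i, e^β_j, c) with α ≠ β, where c is a fixed element of one basis and {e^γ_i} are the other d bases. If additionally ∑_λ min(μ_ψ(λ), μ_φ(λ)) ≥ k(1 − √(1 − |⟨ψ|φ⟩|²)) for all pairs of these states, then k ≤ (1/d)(1 + √(1 − 1/d)) < 2/d; in particular no such model has k = 1. -/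
/-!
Reproducing a measurement forces every ontic state to lie outside the support of some state
to which one of the outcomes assigns probability zero. Applied to the projective measurements,
this makes the supports of the states within a basis disjoint; applied to the
PP-incompatibility measurements, it shows that no ontic state lies in the supports of `c`,
`e α i` and `e β j` at once for `α ≠ β`. Hence at each ontic state `λ` at most one of the
`d²` states `e γ i` shares support with `c`, so the overlaps `∑ min(μ_c, μ_{e γ i})` add up to
at most `1`. Each of them is at least `k (1 - √(1 - 1/d))`, so `d² k (1 - √(1 - 1/d)) ≤ 1`,
which rearranges to `k ≤ (1 + √(1 - 1/d))/d`.
-/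

open Finset

section Supports

variable {ι Λ : Type*} [Fintype ι] [Fintype Λ]

theorem exists_eq_zero_of_sum_mul_eq_zero {ξ ν : ι → Λ → ℝ}
    (hξ : ∀ m l, 0 ≤ ξ m l) (hν : ∀ m l, 0 ≤ ν m l) {l : Λ} (hsum : ∑ m, ξ m l = 1)
    (hborn : ∀ m, ∑ l, ξ m l * ν m l = 0) : ∃ m, ν m l = 0 := by
  by_contra! hsupp
  have hξl : ∀ m, ξ m l = 0 := fun m =>
    ((mul_eq_zero.1 <| (sum_eq_zero_iff_of_nonneg fun l _ => mul_nonneg (hξ m l) (hν m l)).1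
      (hborn m) l (mem_univ l)).resolve_right (hsupp m))
  simp [hξl] at hsum

theorem eq_zero_or_eq_zero_of_born_eq_zero [DecidableEq ι] {ξ μ : ι → Λ → ℝ}
    (hξ : ∀ i l, 0 ≤ ξ i l) (hμ : ∀ i l, 0 ≤ μ i l) {l : Λ} (hsum : ∑ i, ξ i l = 1)
    (hborn : ∀ i j, i ≠ j → ∑ l, ξ i l * μ j l = 0) {i j : ι} (hij : i ≠ j) :
    μ i l = 0 ∨ μ j l = 0 := by
  obtain ⟨m, hm⟩ := exists_eq_zero_of_sum_mul_eq_zero (ν := fun m => if m = i then μ j else μ i)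
    hξ (fun m l => by split_ifs <;> exact hμ _ l) hsum
    (fun m => by split_ifs with h <;> [exact h ▸ hborn i j hij; exact hborn m i h])
  split_ifs at hm
  exacts [Or.inr hm, Or.inl hm]

theorem eq_zero_or_eq_zero_or_eq_zero_of_pp {ξ : Fin 4 → Λ → ℝ} {μ₁ μ₂ μ₃ : Λ → ℝ}
    (hξ : ∀ m l, 0 ≤ ξ m l) (hμ₁ : ∀ l, 0 ≤ μ₁ l) (hμ₂ : ∀ l, 0 ≤ μ₂ l) (hμ₃ : ∀ l, 0 ≤ μ₃ l)
    {l : Λ} (hsum : ∑ m, ξ m l = 1)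
    (h₁ : ∑ l, ξ 0 l * μ₁ l = 0) (h₂ : ∑ l, ξ 1 l * μ₂ l = 0)
    (h₃ : ∑ l, ξ 2 l * μ₃ l = 0) (h₄ : ∑ l, ξ 3 l * μ₁ l = 0) :
    μ₁ l = 0 ∨ μ₂ l = 0 ∨ μ₃ l = 0 := by
  obtain ⟨m, hm⟩ := exists_eq_zero_of_sum_mul_eq_zero (ν := ![μ₁, μ₂, μ₃, μ₁]) hξ
    (fun m l => by fin_cases m <;> simp [hμ₁, hμ₂, hμ₃]) hsum
    (fun m => by fin_cases m <;> simpa)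
  fin_cases m <;> simp_all

end Supports

section Overlaps

variable {κ Λ : Type*} [Fintype κ] [Fintype Λ]

theorem sum_min_le_of_exclusive {a : ℝ} {f : κ → ℝ} (ha : 0 ≤ a) (hf : ∀ p, 0 ≤ f p)
    (hex : ∀ p q, p ≠ q → a = 0 ∨ f p = 0 ∨ f q = 0) : ∑ p, min a (f p) ≤ a := by
  by_cases h : ∃ p, min a (f p) ≠ 0
  · obtain ⟨p, hp⟩ := h
    rw [sum_eq_single p]
    · exact min_le_left _ _
    · intro q _ hqp
      rcases hex q p hqp with h | h | h
      · rw [h, min_eq_left (hf q)]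
      · rw [h, min_eq_right ha]
      · exact absurd (by rw [h, min_eq_right ha]) hp
    · exact fun h => absurd (mem_univ p) h
  · simp [not_exists_not.1 h, ha]

theorem sum_sum_min_le_one {ν : Λ → ℝ} {μ : κ → Λ → ℝ} (hν0 : ∀ l, 0 ≤ ν l)
    (hν1 : ∑ l, ν l = 1) (hμ0 : ∀ p l, 0 ≤ μ p l)
    (hex : ∀ l p q, p ≠ q → ν l = 0 ∨ μ p l = 0 ∨ μ q l = 0) :
    ∑ p, ∑ l, min (ν l) (μ p l) ≤ 1 := by
  rw [sum_comm, ← hν1]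
  exact sum_le_sum fun l _ =>
    sum_min_le_of_exclusive (hν0 l) (fun p => hμ0 p l) (hex l)

end Overlaps

theorem le_one_div_mul_one_add_sqrt {D k : ℝ} (hD : 1 ≤ D)
    (h : D ^ 2 * (k * (1 - Real.sqrt (1 - 1 / D))) ≤ 1) :
    k ≤ 1 / D * (1 + Real.sqrt (1 - 1 / D)) := by
  set s := Real.sqrt (1 - 1 / D)
  have hD0 : 0 < D := by linarith
  have hs2 : s ^ 2 = 1 - 1 / D :=
    Real.sq_sqrt (sub_nonneg.2 ((div_le_one hD0).2 hD))
  have hs1 : s < 1 := by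
    rw [Real.sqrt_lt' one_pos]
    simp [hD0]
  -- `(1 - s)(1 + s) = 1/D`, so `h` says `k D / (1 + s) ≤ 1`
  have hid : D * ((1 - s) * (1 + s)) = 1 := by
    rw [mul_comm (1 - s), ← sq_sub_sq, one_pow, hs2]
    field_simp
    ring
  rw [one_div_mul_eq_div, le_div_iff₀ hD0]
  nlinarith [mul_pos hD0 (sub_pos.2 hs1)]

theorem one_div_mul_one_add_sqrt_lt {D : ℝ} (hD : 0 < D) :
    1 / D * (1 + Real.sqrt (1 - 1 / D)) < 2 / D := by
  have hs1 : Real.sqrt (1 - 1 / D) < 1 := by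
    rw [Real.sqrt_lt' one_pos]
    simp [hD]
  rw [one_div_mul_eq_div]
  exact div_lt_div_of_pos_right (by linarith) hD

theorem no_maximally_psi_epistemic_model_general
    (d : ℕ) (hd : 4 ≤ d)
    (Λ : Type) [Fintype Λ] (k : ℝ)
    -- the quantum states: a fixed state c and d mutually unbiased bases e^γ
    (c : EuclideanSpace ℂ (Fin d)) (e : Fin d → Fin d → EuclideanSpace ℂ (Fin d))
    (hmubc : ∀ γ i, ‖(inner ℂ c (e γ i) : ℂ)‖^2 = 1 / d)
    -- the epistemic states of the ontological model
    (μc : Λ → ℝ) (μ : Fin d → Fin d → Λ → ℝ)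
    (hμc0 : ∀ l, 0 ≤ μc l) (hμc1 : ∑ l, μc l = 1)
    (hμ0 : ∀ γ i l, 0 ≤ μ γ i l)
    -- reproducing the projective measurement on each basis e^γ:
    -- response functions summing to one, with Born-rule statistics
    (ξproj : Fin d → Fin d → Λ → ℝ)
    (hξproj0 : ∀ γ i l, 0 ≤ ξproj γ i l)
    (hξprojsum : ∀ γ l, ∑ i, ξproj γ i l = 1)
    (hξprojborn : ∀ γ i j, ∑ l, ξproj γ i l * μ γ j l = if i = j then 1 else 0)
    -- reproducing the PP-incompatibility measurement for each triple
    -- (e α i, e β j, c) with α ≠ β: a four-outcome measurement whose first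
    -- three outcomes have zero Born probability on e α i, e β j, c respectively
    (ξpp : ∀ (_α _β _i _j : Fin d), Fin 4 → Λ → ℝ)
    (hξpp0 : ∀ α β i j m l, 0 ≤ ξpp α β i j m l)
    (hξppsum : ∀ α β i j l, ∑ m, ξpp α β i j m l = 1)
    (hξpp1 : ∀ α β : Fin d, α ≠ β → ∀ i j : Fin d,
      ∑ l, ξpp α β i j 0 l * μ α i l = 0)
    (hξpp2 : ∀ α β : Fin d, α ≠ β → ∀ i j : Fin d,
      ∑ l, ξpp α β i j 1 l * μ β j l = 0)
    (hξpp3 : ∀ α β : Fin d, α ≠ β → ∀ i j : Fin d,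
      ∑ l, ξpp α β i j 2 l * μc l = 0)
    (hξpp4 : ∀ α β : Fin d, α ≠ β → ∀ i j : Fin d,
      ∑ l, ξpp α β i j 3 l * μ α i l = 0 ∧
      ∑ l, ξpp α β i j 3 l * μ β j l = 0 ∧
      ∑ l, ξpp α β i j 3 l * μc l = 0)
    -- the overlap lower bound for all pairs of these states
    (hk1 : ∀ γ i, ∑ l, min (μc l) (μ γ i l)
      ≥ k * (1 - Real.sqrt (1 - ‖(inner ℂ c (e γ i) : ℂ)‖^2))) :
    k ≤ (1 / d) * (1 + Real.sqrt (1 - 1 / d)) ∧ k < 2 / d ∧ k ≠ 1 := by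
  have hexclusive : ∀ l (p q : Fin d × Fin d), p ≠ q →
      μc l = 0 ∨ μ p.1 p.2 l = 0 ∨ μ q.1 q.2 l = 0 := by
    rintro l ⟨α, i⟩ ⟨β, j⟩ hpq
    by_cases hαβ : α = β
    · subst hαβ
      have hij : i ≠ j := fun h => hpq (h ▸ rfl)
      exact Or.inr (eq_zero_or_eq_zero_of_born_eq_zero (hξproj0 α) (hμ0 α) (hξprojsum α l)
        (fun i j hij => by simpa [hij] using hξprojborn α i j) hij)
    · rcases eq_zero_or_eq_zero_or_eq_zero_of_pp (hξpp0 α β i j) (hμ0 α i) (hμ0 β j) hμc0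
        (hξppsum α β i j l) (hξpp1 α β hαβ i j) (hξpp2 α β hαβ i j) (hξpp3 α β hαβ i j)
        (hξpp4 α β hαβ i j).1 with h | h | h <;> simp [h]
  have hoverlap : ((d : ℝ) ^ 2) * (k * (1 - Real.sqrt (1 - 1 / d))) ≤ 1 :=
    calc ((d : ℝ) ^ 2) * (k * (1 - Real.sqrt (1 - 1 / d)))
        = ∑ _p : Fin d × Fin d, k * (1 - Real.sqrt (1 - 1 / d)) := by simp [sq]
      _ ≤ ∑ p : Fin d × Fin d, ∑ l, min (μc l) (μ p.1 p.2 l) :=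
        sum_le_sum fun p _ => by simpa [hmubc] using hk1 p.1 p.2
      _ ≤ 1 := sum_sum_min_le_one hμc0 hμc1 (fun p => hμ0 p.1 p.2) hexclusive
  have hd' : (4 : ℝ) ≤ d := by exact_mod_cast hd
  have hbound := le_one_div_mul_one_add_sqrt (by linarith) hoverlap
  have hlt := hbound.trans_lt (one_div_mul_one_add_sqrt_lt (by linarith))
  refine ⟨hbound, hlt, fun hk => ?_⟩
  rw [hk, lt_div_iff₀ (by linarith)] at hlt
  linarith

/-- Main no-go theorem of Barrett–Cavalcanti–Lal–Maroney: for a `d`-dimensional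
quantum system (`d ≥ 4` a prime power), an ontological model on a finite ontic
space `Λ` that reproduces the Born rule for `d+1` mutually unbiased bases
(whence orthogonal states have disjoint epistemic supports, via the
response functions `ξproj`) and for the PP-incompatibility measurements on all
triples `(e α i, e β j, c)` with `α ≠ β` (via the response functions `ξpp`),
and which moreover satisfies the overlap lower bound
`∑ min(μ_ψ, μ_φ) ≥ k (1 - √(1 - |⟨ψ|φ⟩|²))` for all pairs of these states,
must have `k ≤ (1/d)(1 + √(1 - 1/d)) < 2/d`; in particular `k ≠ 1`. -/
theorem no_maximally_psi_epistemic_model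
    (d : ℕ) (hd : 4 ≤ d) (hpp : IsPrimePow d)
    (Λ : Type) [Fintype Λ] (k : ℝ)
    -- the quantum states: a fixed state c and d mutually unbiased bases e^γ
    (c : EuclideanSpace ℂ (Fin d)) (e : Fin d → Fin d → EuclideanSpace ℂ (Fin d))
    (hc : ‖c‖ = 1)
    (horth : ∀ γ, Orthonormal ℂ (e γ))
    (hmub : ∀ α β : Fin d, α ≠ β → ∀ i j : Fin d,
      ‖(inner ℂ (e α i) (e β j) : ℂ)‖^2 = 1 / d)
    (hmubc : ∀ γ i, ‖(inner ℂ c (e γ i) : ℂ)‖^2 = 1 / d)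
    -- the epistemic states of the ontological model
    (μc : Λ → ℝ) (μ : Fin d → Fin d → Λ → ℝ)
    (hμc0 : ∀ l, 0 ≤ μc l) (hμc1 : ∑ l, μc l = 1)
    (hμ0 : ∀ γ i l, 0 ≤ μ γ i l) (hμ1 : ∀ γ i, ∑ l, μ γ i l = 1)
    -- reproducing the projective measurement on each basis e^γ:
    -- response functions summing to one, with Born-rule statistics
    (ξproj : Fin d → Fin d → Λ → ℝ)
    (hξproj0 : ∀ γ i l, 0 ≤ ξproj γ i l)
    (hξprojsum : ∀ γ l, ∑ i, ξproj γ i l = 1)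
    (hξprojborn : ∀ γ i j, ∑ l, ξproj γ i l * μ γ j l = if i = j then 1 else 0)
    -- reproducing the PP-incompatibility measurement for each triple
    -- (e α i, e β j, c) with α ≠ β: a four-outcome measurement whose first
    -- three outcomes have zero Born probability on e α i, e β j, c respectively
    (ξpp : ∀ (_α _β _i _j : Fin d), Fin 4 → Λ → ℝ)
    (hξpp0 : ∀ α β i j m l, 0 ≤ ξpp α β i j m l)
    (hξppsum : ∀ α β i j l, ∑ m, ξpp α β i j m l = 1)
    (hξpp1 : ∀ α β : Fin d, α ≠ β → ∀ i j : Fin d,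
      ∑ l, ξpp α β i j 0 l * μ α i l = 0)
    (hξpp2 : ∀ α β : Fin d, α ≠ β → ∀ i j : Fin d,
      ∑ l, ξpp α β i j 1 l * μ β j l = 0)
    (hξpp3 : ∀ α β : Fin d, α ≠ β → ∀ i j : Fin d,
      ∑ l, ξpp α β i j 2 l * μc l = 0)
    (hξpp4 : ∀ α β : Fin d, α ≠ β → ∀ i j : Fin d,
      ∑ l, ξpp α β i j 3 l * μ α i l = 0 ∧
      ∑ l, ξpp α β i j 3 l * μ β j l = 0 ∧
      ∑ l, ξpp α β i j 3 l * μc l = 0)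
    -- the overlap lower bound for all pairs of these states
    (hk1 : ∀ γ i, ∑ l, min (μc l) (μ γ i l)
      ≥ k * (1 - Real.sqrt (1 - ‖(inner ℂ c (e γ i) : ℂ)‖^2)))
    (hk2 : ∀ α β i j, (α, i) ≠ (β, j) → ∑ l, min (μ α i l) (μ β j l)
      ≥ k * (1 - Real.sqrt (1 - ‖(inner ℂ (e α i) (e β j) : ℂ)‖^2))) :
    k ≤ (1 / d) * (1 + Real.sqrt (1 - 1 / d)) ∧ k < 2 / d ∧ k ≠ 1 :=
  no_maximally_psi_epistemic_model_general d hd Λ k c e hmubc μc μ hμc0 hμc1 hμ0 ξproj hξproj0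
    hξprojsum hξprojborn ξpp hξpp0 hξppsum hξpp1 hξpp2 hξpp3 hξpp4 hk1
end
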